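/- The following are equivalent: (i) S_KKT is isolated calm at p̄ for (x̄,λ̄); (ii) T_KKT is isolated calm at (ū,v̄) for (x̄,λ̄). -/

import Mathlib

open Function Set
open scoped InnerProductSpace

noncomputable section

namespace NEPStability

/-! ## Stability notions for set-valued mappings -/

section SetValued

variable {A B : Type*} [NormedAddCommGroup A] [NormedAddCommGroup B]

/-- The Aubin property of a set-valued mapping `Φ` at `a` for `b`. -/
def HasAubinProperty (Φ : A → Set B) (a : A) (b : B) : Prop :=
  b ∈ Φ a ∧
  (∃ ε : ℝ, 0 < ε ∧ IsClosed ({q : A × B | q.2 ∈ Φ q.1} ∩ Metric.closedBall (a, b) ε)) ∧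
  ∃ κ : ℝ, 0 ≤ κ ∧ ∃ U : Set A, ∃ V : Set B,
    IsOpen U ∧ IsOpen V ∧ a ∈ U ∧ b ∈ V ∧
    ∀ a₁ ∈ U, ∀ a₂ ∈ U, ∀ z ∈ Φ a₂ ∩ V, ∃ z' ∈ Φ a₁, ‖z - z'‖ ≤ κ * ‖a₂ - a₁‖

/-- `Φ` has a Lipschitz continuous single-valued localization around `a` for `b`. -/
def HasLipschitzLocalization (Φ : A → Set B) (a : A) (b : B) : Prop :=
  b ∈ Φ a ∧
  ∃ U : Set A, ∃ V : Set B, IsOpen U ∧ IsOpen V ∧ a ∈ U ∧ b ∈ V ∧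
    ∃ σ : A → B, (∃ K : NNReal, LipschitzOnWith K σ U) ∧ (∀ q ∈ U, σ q ∈ V) ∧
      ∀ q ∈ U, ∀ z ∈ V, (z ∈ Φ q ↔ z = σ q)

/-- `Φ` is isolated calm at `a` for `b`. -/
def IsolatedCalmAt (Φ : A → Set B) (a : A) (b : B) : Prop :=
  b ∈ Φ a ∧
  ∃ κ : ℝ, 0 ≤ κ ∧ ∃ U : Set A, ∃ V : Set B,
    IsOpen U ∧ IsOpen V ∧ a ∈ U ∧ b ∈ V ∧
    ∀ q ∈ U, ∀ z ∈ Φ q ∩ V, ‖z - b‖ ≤ κ * ‖q - a‖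

/-- `Φ` is robust isolated calm at `a` for `b`. -/
def RobustIsolatedCalmAt (Φ : A → Set B) (a : A) (b : B) : Prop :=
  b ∈ Φ a ∧
  ∃ κ : ℝ, 0 ≤ κ ∧ ∃ U : Set A, ∃ V : Set B,
    IsOpen U ∧ IsOpen V ∧ a ∈ U ∧ b ∈ V ∧
    (∀ q ∈ U, ∀ z ∈ Φ q ∩ V, ‖z - b‖ ≤ κ * ‖q - a‖) ∧
    ∀ q ∈ U, (Φ q ∩ V).Nonempty

end SetValued

section C1

variable {A B : Type*} [NormedAddCommGroup A] [NormedSpace ℝ A]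
  [NormedAddCommGroup B] [NormedSpace ℝ B]

/-- `Φ` has a continuously differentiable single-valued localization around `a` for `b`. -/
def HasC1Localization (Φ : A → Set B) (a : A) (b : B) : Prop :=
  b ∈ Φ a ∧
  ∃ U : Set A, ∃ V : Set B, IsOpen U ∧ IsOpen V ∧ a ∈ U ∧ b ∈ V ∧
    ∃ σ : A → B, ContDiffOn ℝ 1 σ U ∧ (∀ q ∈ U, σ q ∈ V) ∧
      ∀ q ∈ U, ∀ z ∈ V, (z ∈ Φ q ↔ z = σ q)

end C1

/-! ## The Nash equilibrium problem -/

/-- The data of an `N`-player Nash equilibrium problem with canonical perturbations: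
player `k` has strategy space `ℝ^{n k}`, `m k` constraints of which the first `s k` are
equalities, and parameter space `ℝ^{d k}`; `f` are the objective functions and `g` the
constraint functions. -/
structure NEPData (N : ℕ) (n m d : Fin N → ℕ) where
  s : Fin N → ℕ
  f : ∀ k : Fin N, (∀ j, EuclideanSpace ℝ (Fin (n j))) → EuclideanSpace ℝ (Fin (d k)) → ℝ
  g : ∀ k : Fin N, Fin (m k) → EuclideanSpace ℝ (Fin (n k)) → EuclideanSpace ℝ (Fin (d k)) → ℝ

/-- Inner product of two strategy profiles. -/
def pinner {N : ℕ} {n : Fin N → ℕ} (y z : ∀ j, EuclideanSpace ℝ (Fin (n j))) : ℝ :=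
  ∑ k, ⟪y k, z k⟫_ℝ

/-- Polar cone of a set of strategy profiles. -/
def polarCone {N : ℕ} {n : Fin N → ℕ} (K : Set (∀ j, EuclideanSpace ℝ (Fin (n j)))) :
    Set (∀ j, EuclideanSpace ℝ (Fin (n j))) :=
  {z | ∀ y ∈ K, pinner z y ≤ 0}

namespace NEPData

variable {N : ℕ} {n m d : Fin N → ℕ} (P : NEPData N n m d)

/-- The gradient `∇_{x^k} L^k(x,λ^k;w^k)` of player `k`'s Lagrangian with respect to
its own strategy. -/
def gradLag (k : Fin N) (x : ∀ j, EuclideanSpace ℝ (Fin (n j)))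
    (lk : EuclideanSpace ℝ (Fin (m k))) (wk : EuclideanSpace ℝ (Fin (d k))) :
    EuclideanSpace ℝ (Fin (n k)) :=
  gradient (fun y : EuclideanSpace ℝ (Fin (n k)) =>
    P.f k (Function.update x k y) wk + ∑ i, lk i * P.g k i y wk) (x k)

/-- The gradient `∇_{x^k} g^k_i(x^k;w^k)`. -/
def gradg (k : Fin N) (i : Fin (m k)) (xk : EuclideanSpace ℝ (Fin (n k)))
    (wk : EuclideanSpace ℝ (Fin (d k))) : EuclideanSpace ℝ (Fin (n k)) :=
  gradient (fun y => P.g k i y wk) xk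

/-- The Hessian block `∇²_{x^k x^i} L^k(x,λ^k;w^k)`, as a continuous linear map from
player `i`'s space to player `k`'s space. -/
def hessLag (k i : Fin N) (x : ∀ j, EuclideanSpace ℝ (Fin (n j)))
    (lk : EuclideanSpace ℝ (Fin (m k))) (wk : EuclideanSpace ℝ (Fin (d k))) :
    EuclideanSpace ℝ (Fin (n i)) →L[ℝ] EuclideanSpace ℝ (Fin (n k)) :=
  fderiv ℝ (fun y : EuclideanSpace ℝ (Fin (n i)) =>
    P.gradLag k (Function.update x i y) lk wk) (x i)

/-- The KKT solution mapping `S_KKT` of the NEP with canonical perturbations: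
`p = (u,v,w)`. -/
def SKKT (p : (∀ k, EuclideanSpace ℝ (Fin (m k))) × (∀ j, EuclideanSpace ℝ (Fin (n j)))
      × (∀ k, EuclideanSpace ℝ (Fin (d k)))) :
    Set ((∀ j, EuclideanSpace ℝ (Fin (n j))) × (∀ k, EuclideanSpace ℝ (Fin (m k)))) :=
  {xl | ∀ k,
    P.gradLag k xl.1 (xl.2 k) (p.2.2 k) = p.2.1 k ∧
    (∀ i : Fin (m k), (i : ℕ) < P.s k → P.g k i (xl.1 k) (p.2.2 k) = p.1 k i) ∧
    (∀ i : Fin (m k), P.s k ≤ (i : ℕ) →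
      0 ≤ xl.2 k i ∧ P.g k i (xl.1 k) (p.2.2 k) ≤ p.1 k i ∧
      xl.2 k i * (P.g k i (xl.1 k) (p.2.2 k) - p.1 k i) = 0)}

/-- The KKT solution mapping `T_KKT` of the NEP with only tilt perturbations, the
parameter `w` being fixed at `wb`. -/
def TKKT (wb : ∀ k, EuclideanSpace ℝ (Fin (d k)))
    (uv : (∀ k, EuclideanSpace ℝ (Fin (m k))) × (∀ j, EuclideanSpace ℝ (Fin (n j)))) :
    Set ((∀ j, EuclideanSpace ℝ (Fin (n j))) × (∀ k, EuclideanSpace ℝ (Fin (m k)))) :=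
  P.SKKT (uv.1, uv.2, wb)

/-- The linearized KKT mapping `L_KKT` at the reference point `(pb, xb, lb)`. -/
def LKKT (pb : (∀ k, EuclideanSpace ℝ (Fin (m k))) × (∀ j, EuclideanSpace ℝ (Fin (n j)))
      × (∀ k, EuclideanSpace ℝ (Fin (d k))))
    (xb : ∀ j, EuclideanSpace ℝ (Fin (n j))) (lb : ∀ k, EuclideanSpace ℝ (Fin (m k)))
    (uv : (∀ k, EuclideanSpace ℝ (Fin (m k))) × (∀ j, EuclideanSpace ℝ (Fin (n j)))) :
    Set ((∀ j, EuclideanSpace ℝ (Fin (n j))) × (∀ k, EuclideanSpace ℝ (Fin (m k)))) :=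
  {xl | ∀ k,
    uv.2 k = P.gradLag k xb (lb k) (pb.2.2 k)
      + ∑ i, P.hessLag k i xb (lb k) (pb.2.2 k) (xl.1 i - xb i)
      + ∑ j, (xl.2 k j - lb k j) • P.gradg k j (xb k) (pb.2.2 k) ∧
    (∀ i : Fin (m k), (i : ℕ) < P.s k →
      P.g k i (xb k) (pb.2.2 k) + ⟪P.gradg k i (xb k) (pb.2.2 k), xl.1 k - xb k⟫_ℝ
        = uv.1 k i) ∧
    (∀ i : Fin (m k), P.s k ≤ (i : ℕ) →
      0 ≤ xl.2 k i ∧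
      P.g k i (xb k) (pb.2.2 k) + ⟪P.gradg k i (xb k) (pb.2.2 k), xl.1 k - xb k⟫_ℝ
        ≤ uv.1 k i ∧
      xl.2 k i * (P.g k i (xb k) (pb.2.2 k)
        + ⟪P.gradg k i (xb k) (pb.2.2 k), xl.1 k - xb k⟫_ℝ - uv.1 k i) = 0)}

section Reference

variable (pb : (∀ k, EuclideanSpace ℝ (Fin (m k))) × (∀ j, EuclideanSpace ℝ (Fin (n j)))
    × (∀ k, EuclideanSpace ℝ (Fin (d k))))
  (xb : ∀ j, EuclideanSpace ℝ (Fin (n j))) (lb : ∀ k, EuclideanSpace ℝ (Fin (m k)))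

/-- The index set `I^k_1` of equality and strongly active inequality constraints. -/
def idx1 (k : Fin N) : Set (Fin (m k)) :=
  {i | (i : ℕ) < P.s k ∨
    (P.s k ≤ (i : ℕ) ∧ 0 < lb k i ∧ P.g k i (xb k) (pb.2.2 k) = pb.1 k i)}

/-- The index set `I^k_2` of weakly active inequality constraints. -/
def idx2 (k : Fin N) : Set (Fin (m k)) :=
  {i | P.s k ≤ (i : ℕ) ∧ lb k i = 0 ∧ P.g k i (xb k) (pb.2.2 k) = pb.1 k i}

/-- The index set `I^k_3` of inactive inequality constraints. -/
def idx3 (k : Fin N) : Set (Fin (m k)) :=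
  {i | P.s k ≤ (i : ℕ) ∧ lb k i = 0 ∧ P.g k i (xb k) (pb.2.2 k) < pb.1 k i}

/-- The linear independence constraint qualification for player `k`. -/
def LICQ (k : Fin N) : Prop :=
  LinearIndependent ℝ
    (fun i : ↥(P.idx1 pb xb lb k ∪ P.idx2 pb xb lb k) => P.gradg k i.1 (xb k) (pb.2.2 k))

/-- The strict Mangasarian–Fromovitz constraint qualification for player `k`. -/
def SMFCQ (k : Fin N) : Prop :=
  LinearIndependent ℝ (fun i : ↥(P.idx1 pb xb lb k) => P.gradg k i.1 (xb k) (pb.2.2 k)) ∧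
  ∃ y : EuclideanSpace ℝ (Fin (n k)),
    (∀ i ∈ P.idx1 pb xb lb k, ⟪P.gradg k i (xb k) (pb.2.2 k), y⟫_ℝ = 0) ∧
    (∀ i ∈ P.idx2 pb xb lb k, ⟪P.gradg k i (xb k) (pb.2.2 k), y⟫_ℝ < 0)

/-- The strict complementary slackness condition for player `k`. -/
def SCSC (k : Fin N) : Prop := P.idx2 pb xb lb k = ∅

/-- The cone `K(J_1,J_2)` associated with families of index sets `J_1, J_2`. -/
def Kcone (J1 J2 : ∀ k, Set (Fin (m k))) : Set (∀ j, EuclideanSpace ℝ (Fin (n j))) :=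
  {y | ∀ k, (∀ i ∈ J1 k, ⟪P.gradg k i (xb k) (pb.2.2 k), y k⟫_ℝ = 0) ∧
            (∀ i ∈ J2 k, ⟪P.gradg k i (xb k) (pb.2.2 k), y k⟫_ℝ ≤ 0)}

/-- Membership in the index partition set `𝓘`. -/
def IsCriticalPartition (J1 J2 J3 : ∀ k, Set (Fin (m k))) : Prop :=
  ∀ k, J1 k ∪ J2 k ∪ J3 k = Set.univ ∧
    Disjoint (J1 k) (J2 k) ∧ Disjoint (J1 k) (J3 k) ∧ Disjoint (J2 k) (J3 k) ∧
    P.idx1 pb xb lb k ⊆ J1 k ∧ J1 k ⊆ P.idx1 pb xb lb k ∪ P.idx2 pb xb lb k ∧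
    P.idx3 pb xb lb k ⊆ J3 k ∧ J3 k ⊆ P.idx2 pb xb lb k ∪ P.idx3 pb xb lb k

/-- The subspace `M^k`, the null space of the gradients of player `k`'s strongly
active constraints. -/
def Mset (k : Fin N) : Set (EuclideanSpace ℝ (Fin (n k))) :=
  {y | ∀ i ∈ P.idx1 pb xb lb k, ⟪P.gradg k i (xb k) (pb.2.2 k), y⟫_ℝ = 0}

/-- The critical cone of player `k`. -/
def critCone (k : Fin N) : Set (EuclideanSpace ℝ (Fin (n k))) :=
  {y | (∀ i ∈ P.idx1 pb xb lb k, ⟪P.gradg k i (xb k) (pb.2.2 k), y⟫_ℝ = 0) ∧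
       (∀ i ∈ P.idx2 pb xb lb k, ⟪P.gradg k i (xb k) (pb.2.2 k), y⟫_ℝ ≤ 0)}

/-- The strong second-order sufficient condition for player `k`. -/
def SSOSC (k : Fin N) : Prop :=
  ∀ y ∈ P.Mset pb xb lb k, y ≠ 0 → 0 < ⟪y, P.hessLag k k xb (lb k) (pb.2.2 k) y⟫_ℝ

/-- The second-order sufficient condition for player `k`. -/
def SOSC (k : Fin N) : Prop :=
  ∀ y ∈ P.critCone pb xb lb k, y ≠ 0 → 0 < ⟪y, P.hessLag k k xb (lb k) (pb.2.2 k) y⟫_ℝ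

/-- The matrix `A_{ki} := ∇²_{x^k x^i}L^k + (∇²_{x^i x^k}L^i)ᵀ`. -/
def Amap (k i : Fin N) :
    EuclideanSpace ℝ (Fin (n i)) →L[ℝ] EuclideanSpace ℝ (Fin (n k)) :=
  P.hessLag k i xb (lb k) (pb.2.2 k) + (P.hessLag i k xb (lb i) (pb.2.2 i)).adjoint

/-- `B` is a family of basis matrices: `B k` has `n k - |I^k_1|` columns forming a
basis of `M^k`. -/
def IsBasisFamily
    (B : ∀ k, EuclideanSpace ℝ (Fin (n k - (P.idx1 pb xb lb k).ncard)) →L[ℝ]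
      EuclideanSpace ℝ (Fin (n k))) : Prop :=
  ∀ k, Function.Injective (B k) ∧ Set.range (B k) = P.Mset pb xb lb k

/-- Condition (α): the coupling condition on the Hessian blocks with parameters `α`
and basis matrices `B`. -/
def CondAlpha
    (B : ∀ k, EuclideanSpace ℝ (Fin (n k - (P.idx1 pb xb lb k).ncard)) →L[ℝ]
      EuclideanSpace ℝ (Fin (n k)))
    (α : Fin N → Fin N → ℝ) : Prop :=
  ∀ i k : Fin N, i ≠ k → ∀ y ∈ P.Mset pb xb lb k, y ≠ 0 →
    0 < ⟪y, (P.hessLag k k xb (lb k) (pb.2.2 k)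
      - (1 / (4 * α i k * α k i)) •
        ((P.Amap pb xb lb i k).adjoint.comp ((B i).comp
          ((Ring.inverse (((B i).adjoint).comp
            ((P.hessLag i i xb (lb i) (pb.2.2 i)).comp (B i)))).comp
            (((B i).adjoint).comp (P.Amap pb xb lb i k)))))) y⟫_ℝ

/-- The I-property on `K(I_1,I_2)`. -/
def IProperty : Prop :=
  ∀ y ∈ P.Kcone pb xb (P.idx1 pb xb lb) (P.idx2 pb xb lb),
    (∀ k, ∑ i, ⟪y k, P.hessLag k i xb (lb k) (pb.2.2 k) (y i)⟫_ℝ = 0) → y = 0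

/-- The P-property on `K(I_1,I_2)`. -/
def PProperty : Prop :=
  ∀ y ∈ P.Kcone pb xb (P.idx1 pb xb lb) (P.idx2 pb xb lb), y ≠ 0 →
    ∃ k, 0 < (∑ i ∈ Finset.univ.erase k,
        ⟪y k, P.hessLag k i xb (lb k) (pb.2.2 k) (y i)⟫_ℝ)
      + (1 / 2) * ⟪y k, P.hessLag k k xb (lb k) (pb.2.2 k) (y k)⟫_ℝ

end Reference

/-- The feasible set of player `k` at the perturbation `(uk, wk)`. -/
def feasSet (k : Fin N) (uk : EuclideanSpace ℝ (Fin (m k)))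
    (wk : EuclideanSpace ℝ (Fin (d k))) : Set (EuclideanSpace ℝ (Fin (n k))) :=
  {y | (∀ i : Fin (m k), (i : ℕ) < P.s k → P.g k i y wk = uk i) ∧
       (∀ i : Fin (m k), P.s k ≤ (i : ℕ) → P.g k i y wk ≤ uk i)}

/-- `x` is a local Nash equilibrium of the NEP at the perturbation `p`. -/
def IsLocalNash (p : (∀ k, EuclideanSpace ℝ (Fin (m k))) × (∀ j, EuclideanSpace ℝ (Fin (n j)))
      × (∀ k, EuclideanSpace ℝ (Fin (d k))))
    (x : ∀ j, EuclideanSpace ℝ (Fin (n j))) : Prop :=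
  ∀ k, x k ∈ P.feasSet k (p.1 k) (p.2.2 k) ∧
    ∃ ε : ℝ, 0 < ε ∧ ∀ y ∈ P.feasSet k (p.1 k) (p.2.2 k), ‖y - x k‖ < ε →
      P.f k x (p.2.2 k) - ⟪p.2.1 k, x k⟫_ℝ
        ≤ P.f k (Function.update x k y) (p.2.2 k) - ⟪p.2.1 k, y⟫_ℝ

/-- `x` is a (global) Nash equilibrium of the NEP at the perturbation `p`. -/
def IsNash (p : (∀ k, EuclideanSpace ℝ (Fin (m k))) × (∀ j, EuclideanSpace ℝ (Fin (n j)))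
      × (∀ k, EuclideanSpace ℝ (Fin (d k))))
    (x : ∀ j, EuclideanSpace ℝ (Fin (n j))) : Prop :=
  ∀ k, x k ∈ P.feasSet k (p.1 k) (p.2.2 k) ∧
    ∀ y ∈ P.feasSet k (p.1 k) (p.2.2 k),
      P.f k x (p.2.2 k) - ⟪p.2.1 k, x k⟫_ℝ
        ≤ P.f k (Function.update x k y) (p.2.2 k) - ⟪p.2.1 k, y⟫_ℝ

/-- The convex assumptions on the NEP. -/
def ConvexAssumptions : Prop :=
  (∀ (k : Fin N) (x : ∀ j, EuclideanSpace ℝ (Fin (n j))) (w : EuclideanSpace ℝ (Fin (d k))),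
    ConvexOn ℝ Set.univ (fun y : EuclideanSpace ℝ (Fin (n k)) =>
      P.f k (Function.update x k y) w)) ∧
  (∀ (k : Fin N) (i : Fin (m k)), (i : ℕ) < P.s k →
    ∀ w : EuclideanSpace ℝ (Fin (d k)),
      ∃ (l : EuclideanSpace ℝ (Fin (n k)) →L[ℝ] ℝ) (c : ℝ), ∀ y, P.g k i y w = l y + c) ∧
  (∀ (k : Fin N) (i : Fin (m k)), P.s k ≤ (i : ℕ) →
    ∀ w : EuclideanSpace ℝ (Fin (d k)),
      ConvexOn ℝ Set.univ (fun y : EuclideanSpace ℝ (Fin (n k)) => P.g k i y w))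

/-- Smoothness of the data: each `f^k` is `C²` jointly in `(x,w^k)` and each `g^k_i`
is `C²` jointly in `(x^k,w^k)`. -/
def IsC2Data : Prop :=
  (∀ k : Fin N, ContDiff ℝ 2 (fun q : (∀ j, EuclideanSpace ℝ (Fin (n j)))
      × EuclideanSpace ℝ (Fin (d k)) => P.f k q.1 q.2)) ∧
  (∀ (k : Fin N) (i : Fin (m k)), ContDiff ℝ 2 (fun q : EuclideanSpace ℝ (Fin (n k))
      × EuclideanSpace ℝ (Fin (d k)) => P.g k i q.1 q.2))

end NEPData

end NEPStability

/-! Freezing `w = w̄` restricts `S_KKT` to a slice of its parameter space, which gives (i) ⇒ (ii).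
Conversely, with `F(z, w) = (g(x; w), ∇ₓL(x, λ; w))`, a KKT point `z` for `(u, v, w)` is a KKT
point for `(u, v) + F(z, w̄) - F(z, w)` at `w̄`. Since `F` is `C¹`, this shift of the tilt
parameters is `O(‖w - w̄‖)` near `(z̄, w̄)`, so isolated calmness of `T_KKT` bounds `‖z - z̄‖` by a
multiple of `‖p - p̄‖`. -/

namespace NEPStability

open Filter Topology Asymptotics

section IsolatedCalm

variable {A A' B : Type*} [NormedAddCommGroup A] [NormedAddCommGroup A'] [NormedAddCommGroup B]

theorem isolatedCalmAt_iff_isBigO {Φ : A → Set B} {a : A} {b : B} :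
    IsolatedCalmAt Φ a b ↔ b ∈ Φ a ∧
      (fun qz : A × B => qz.2 - b) =O[𝓝[{qz | qz.2 ∈ Φ qz.1}] (a, b)] fun qz => qz.1 - a := by
  constructor
  · rintro ⟨hb, κ, -, U, V, hU, hV, haU, hbV, hbound⟩
    refine ⟨hb, IsBigO.of_bound κ ?_⟩
    filter_upwards [inter_mem_nhdsWithin _ ((hU.prod hV).mem_nhds ⟨haU, hbV⟩)]
      with qz ⟨hqz, hqU, hzV⟩
    exact hbound qz.1 hqU qz.2 ⟨hqz, hzV⟩
  · rintro ⟨hb, hO⟩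
    obtain ⟨κ, hκ, hκO⟩ := hO.exists_nonneg
    obtain ⟨U, V, hU, haU, hV, hbV, hUV⟩ :=
      mem_nhds_prod_iff'.1 (eventually_nhdsWithin_iff.1 hκO.bound)
    exact ⟨hb, κ, hκ, U, V, hU, hV, haU, hbV, fun q hq z hz => @hUV (q, z) ⟨hq, hz.2⟩ hz.1⟩

theorem IsolatedCalmAt.of_isBigO_reparam {Φ : A → Set B} {Ψ : A' → Set B} {a : A} {a' : A'}
    {b : B} (hΨ : IsolatedCalmAt Ψ a' b) (hb : b ∈ Φ a) (θ : A × B → A')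
    (hmem : ∀ q z, z ∈ Φ q → z ∈ Ψ (θ (q, z)))
    (hθ : (fun qz => θ qz - a') =O[𝓝[{qz | qz.2 ∈ Φ qz.1}] (a, b)] fun qz => qz.1 - a) :
    IsolatedCalmAt Φ a b := by
  rw [isolatedCalmAt_iff_isBigO] at hΨ ⊢
  have hfst : Tendsto (fun qz : A × B => qz.1 - a) (𝓝[{qz | qz.2 ∈ Φ qz.1}] (a, b)) (𝓝 0) :=
    tendsto_sub_nhds_zero_iff.2 ((continuous_fst.tendsto _).mono_left nhdsWithin_le_nhds)
  have hgraph : Tendsto (fun qz : A × B => (θ qz, qz.2)) (𝓝[{qz | qz.2 ∈ Φ qz.1}] (a, b))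
      (𝓝[{qz | qz.2 ∈ Ψ qz.1}] (a', b)) :=
    tendsto_nhdsWithin_iff.2
      ⟨(tendsto_sub_nhds_zero_iff.1 (hθ.trans_tendsto hfst)).prodMk_nhds
          ((continuous_snd.tendsto _).mono_left nhdsWithin_le_nhds),
        eventually_mem_nhdsWithin.mono fun qz hqz => hmem _ _ hqz⟩
  exact ⟨hb, (hΨ.2.comp_tendsto hgraph).trans hθ⟩

end IsolatedCalm

theorem HasStrictFDerivAt.isBigO_sub_snd {E W G : Type*} [NormedAddCommGroup E]
    [NormedSpace ℝ E] [NormedAddCommGroup W] [NormedSpace ℝ W] [NormedAddCommGroup G]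
    [NormedSpace ℝ G] {F : E × W → G} {F' : E × W →L[ℝ] G} {z₀ : E} {w₀ : W}
    (hF : HasStrictFDerivAt F F' (z₀, w₀)) :
    (fun zw : E × W => F zw - F (zw.1, w₀)) =O[𝓝 (z₀, w₀)] fun zw => zw.2 - w₀ := by
  have hpair : Tendsto (fun zw : E × W => (zw, (zw.1, w₀))) (𝓝 (z₀, w₀))
      (𝓝 ((z₀, w₀), (z₀, w₀))) :=
    (continuous_id.prodMk (continuous_fst.prodMk continuous_const)).tendsto' _ _ rfl
  refine (hF.isBigO_sub.comp_tendsto hpair).trans_le fun zw => ?_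
  simp [Prod.norm_def]

section PiSmooth

variable {ι : Type*} [Fintype ι] {F : ι → Type*} [∀ i, NormedAddCommGroup (F i)]
  [∀ i, NormedSpace ℝ (F i)] {k : WithTop ℕ∞}

@[fun_prop]
theorem contDiff_pi_apply (i : ι) : ContDiff ℝ k fun f : (∀ j, F j) => f i :=
  contDiff_pi.1 contDiff_id i

theorem contDiff_update_prod [DecidableEq ι] (i : ι) :
    ContDiff ℝ k fun q : (∀ j, F j) × F i => Function.update q.1 i q.2 := by
  refine contDiff_pi.2 fun j => ?_
  rcases eq_or_ne j i with rfl | hji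
  · simpa only [Function.update_self] using contDiff_snd
  · simp only [Function.update_of_ne hji]
    exact (contDiff_pi_apply j).comp contDiff_fst

end PiSmooth

namespace NEPData

variable {N : ℕ} {n m d : Fin N → ℕ} (P : NEPData N n m d)

abbrev PrimalDual (n m : Fin N → ℕ) : Type :=
  (∀ j, EuclideanSpace ℝ (Fin (n j))) × (∀ k, EuclideanSpace ℝ (Fin (m k)))

def kktMap (z : PrimalDual n m × ∀ k, EuclideanSpace ℝ (Fin (d k))) :
    (∀ k, EuclideanSpace ℝ (Fin (m k))) × (∀ j, EuclideanSpace ℝ (Fin (n j))) :=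
  (fun k => WithLp.toLp 2 fun i => P.g k i (z.1.1 k) (z.2 k),
    fun k => P.gradLag k z.1.1 (z.1.2 k) (z.2 k))

theorem mem_TKKT_of_mem_SKKT (wb : ∀ k, EuclideanSpace ℝ (Fin (d k)))
    {p : (∀ k, EuclideanSpace ℝ (Fin (m k))) × (∀ j, EuclideanSpace ℝ (Fin (n j)))
      × (∀ k, EuclideanSpace ℝ (Fin (d k)))}
    {xl : PrimalDual n m} (h : xl ∈ P.SKKT p) :
    xl ∈ P.TKKT wb ((p.1, p.2.1) + (P.kktMap (xl, wb) - P.kktMap (xl, p.2.2))) := by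
  intro k
  obtain ⟨hgrad, heq, hineq⟩ := h k
  simp only [kktMap, Prod.fst_add, Prod.snd_add, Prod.fst_sub, Prod.snd_sub, Pi.add_apply,
    Pi.sub_apply, PiLp.add_apply, PiLp.sub_apply]
  refine ⟨by rw [hgrad]; abel, fun i hi => by rw [heq i hi]; ring, fun i hi => ?_⟩
  obtain ⟨hl, hle, hcomp⟩ := hineq i hi
  exact ⟨hl, by linarith, by rw [← hcomp]; ring⟩

theorem IsC2Data.contDiff_gradLag {P : NEPData N n m d} (hC2 : P.IsC2Data) (k : Fin N) :
    ContDiff ℝ 1 fun z : PrimalDual n m × ∀ k, EuclideanSpace ℝ (Fin (d k)) =>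
      P.gradLag k z.1.1 (z.1.2 k) (z.2 k) := by
  have hw : ContDiff ℝ 2 fun q : (PrimalDual n m × ∀ k, EuclideanSpace ℝ (Fin (d k))) ×
      EuclideanSpace ℝ (Fin (n k)) => q.1.2 k := by fun_prop
  have hlag : ContDiff ℝ 2 <| Function.uncurry
      fun (z : PrimalDual n m × ∀ k, EuclideanSpace ℝ (Fin (d k))) y =>
        P.f k (Function.update z.1.1 k y) (z.2 k) + ∑ i, z.1.2 k i * P.g k i y (z.2 k) :=
    ((hC2.1 k).comp (((contDiff_update_prod k).comp
      (contDiff_fst.fst.fst.prodMk contDiff_snd)).prodMk hw)).add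
      (ContDiff.sum fun i _ => ContDiff.mul (by fun_prop)
        ((hC2.2 k i).comp (contDiff_snd.prodMk hw)))
  unfold gradLag gradient
  exact (InnerProductSpace.toDual ℝ _).symm.contDiff.comp <|
    hlag.fderiv (by fun_prop) (by norm_num)

theorem IsC2Data.contDiff_kktMap {P : NEPData N n m d} (hC2 : P.IsC2Data) :
    ContDiff ℝ 1 P.kktMap := by
  refine (contDiff_pi.2 fun k => ?_).prodMk (contDiff_pi.2 hC2.contDiff_gradLag)
  have hxw : ContDiff ℝ 1 fun z : PrimalDual n m × ∀ k, EuclideanSpace ℝ (Fin (d k)) =>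
      (z.1.1 k, z.2 k) := by fun_prop
  exact (PiLp.continuousLinearEquiv 2 ℝ _).symm.contDiff.comp <|
    contDiff_pi.2 fun i => ((hC2.2 k i).of_le one_le_two).comp hxw

section Calm

variable {P} {pb : (∀ k, EuclideanSpace ℝ (Fin (m k))) × (∀ j, EuclideanSpace ℝ (Fin (n j)))
    × (∀ k, EuclideanSpace ℝ (Fin (d k)))} {xl : PrimalDual n m}

theorem isolatedCalmAt_TKKT_of_SKKT (h : IsolatedCalmAt P.SKKT pb xl) :
    IsolatedCalmAt (P.TKKT pb.2.2) (pb.1, pb.2.1) xl := by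
  refine h.of_isBigO_reparam h.1 (fun q => (q.1.1, q.1.2, pb.2.2)) (fun _ _ hz => hz) ?_
  refine isBigO_of_le _ fun q => ?_
  simp [Prod.norm_def]

theorem isolatedCalmAt_SKKT_of_TKKT (hC2 : P.IsC2Data)
    (h : IsolatedCalmAt (P.TKKT pb.2.2) (pb.1, pb.2.1) xl) : IsolatedCalmAt P.SKKT pb xl := by
  refine h.of_isBigO_reparam h.1
    (fun q => (q.1.1, q.1.2.1) + (P.kktMap (q.2, pb.2.2) - P.kktMap (q.2, q.1.2.2)))
    (fun _ _ hz => P.mem_TKKT_of_mem_SKKT pb.2.2 hz) ?_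
  have htilt : (fun q : _ × PrimalDual n m => (q.1.1, q.1.2.1) - (pb.1, pb.2.1))
      =O[𝓝 (pb, xl)] fun q => q.1 - pb :=
    isBigO_of_le _ fun q => max_le_max le_rfl (norm_fst_le (q.1 - pb).2)
  have hshift : (fun q : _ × PrimalDual n m => P.kktMap (q.2, q.1.2.2) - P.kktMap (q.2, pb.2.2))
      =O[𝓝 (pb, xl)] fun q => q.1 - pb := by
    have hpair : Tendsto (fun q : _ × PrimalDual n m => (q.2, q.1.2.2)) (𝓝 (pb, xl))
        (𝓝 (xl, pb.2.2)) :=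
      (continuous_snd.prodMk continuous_fst.snd.snd).tendsto _
    refine ((HasStrictFDerivAt.isBigO_sub_snd <|
      hC2.contDiff_kktMap.contDiffAt.hasStrictFDerivAt one_ne_zero).comp_tendsto hpair).trans_le
      fun q => ?_
    simp [Prod.norm_def]
  exact ((htilt.sub hshift).congr_left fun q => by abel).mono nhdsWithin_le_nhds

end Calm

end NEPData

end NEPStability

open NEPStability

theorem stmt9_general {N : ℕ} {n m d : Fin N → ℕ} (P : NEPData N n m d)
    (hC2 : P.IsC2Data)
    (pb : (∀ k, EuclideanSpace ℝ (Fin (m k))) × (∀ j, EuclideanSpace ℝ (Fin (n j)))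
      × (∀ k, EuclideanSpace ℝ (Fin (d k))))
    (xb : ∀ j, EuclideanSpace ℝ (Fin (n j))) (lb : ∀ k, EuclideanSpace ℝ (Fin (m k))) :
    IsolatedCalmAt P.SKKT pb (xb, lb) ↔
      IsolatedCalmAt (P.TKKT pb.2.2) (pb.1, pb.2.1) (xb, lb) :=
  ⟨NEPData.isolatedCalmAt_TKKT_of_SKKT, NEPData.isolatedCalmAt_SKKT_of_TKKT hC2⟩

/-- Corollary 5.1: isolated calmness of `S_KKT` is equivalent to isolated calmness of `T_KKT`. -/
theorem stmt9 {N : ℕ} {n m d : Fin N → ℕ} (P : NEPData N n m d)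
    (hC2 : P.IsC2Data)
    (pb : (∀ k, EuclideanSpace ℝ (Fin (m k))) × (∀ j, EuclideanSpace ℝ (Fin (n j)))
      × (∀ k, EuclideanSpace ℝ (Fin (d k))))
    (xb : ∀ j, EuclideanSpace ℝ (Fin (n j))) (lb : ∀ k, EuclideanSpace ℝ (Fin (m k)))
    (hsol : (xb, lb) ∈ P.SKKT pb) :
    IsolatedCalmAt P.SKKT pb (xb, lb) ↔
      IsolatedCalmAt (P.TKKT pb.2.2) (pb.1, pb.2.1) (xb, lb) :=
  stmt9_general P hC2 pb xb lb
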